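/- Let γ be the standard Gaussian measure on ℝ^d and let 0 < β < 1/2. Let h : ℝ^d → [0,∞) be measurable with ∫ h dγ = 1, finite relative entropy Ent_γ(h) = ∫ h log h dγ < ∞, and finite second moment ∫ ‖v‖² h(v) dγ(v) < ∞; let m = ∫ v h dγ be its mean and Σ = ∫ (v−m)(v−m)ᵀ h(v) dγ(v) its covariance matrix. Let K be a symmetric real d×d matrix with I_d − K positive semidefinite. Then the Gaussian exponential moment Λ_β(K) := log ∫ exp(β·⟨z⊗z − I_d, K⟩_F) dγ(z) is finite and ⟨Σ − I_d, K⟩_F ≤ (1/β) Ent_γ(h) + (1/β) Λ_β(K), where ⟨A,B⟩_F = tr(AᵀB) denotes the Frobenius inner product and z⊗z = z zᵀ. -/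

import Mathlib

open MeasureTheory Real Matrix
open scoped ENNReal NNReal

/-- The standard Gaussian probability measure on `ℝ^d`. -/
noncomputable def stdGaussian (d : ℕ) : Measure (EuclideanSpace ℝ (Fin d)) :=
  (volume : Measure (EuclideanSpace ℝ (Fin d))).withDensity
    (fun v => ENNReal.ofReal ((2 * π) ^ (-(d : ℝ) / 2) * Real.exp (-‖v‖ ^ 2 / 2)))

/-- The Frobenius inner product `⟨A,B⟩_F = tr(AᵀB)` of two square matrices. -/
noncomputable def frobInner {d : ℕ} (A B : Matrix (Fin d) (Fin d) ℝ) : ℝ :=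
  (Aᵀ * B).trace


lemma frobInner_eq {d : ℕ} (A B : Matrix (Fin d) (Fin d) ℝ) :
    frobInner A B = ∑ j, ∑ i, A i j * B i j := by
  simp [frobInner, Matrix.trace, Matrix.mul_apply, Matrix.diag, Matrix.transpose_apply]

lemma frob_sub_one {d : ℕ} (A K : Matrix (Fin d) (Fin d) ℝ) :
    frobInner (A - 1) K = (∑ j, ∑ i, A i j * K i j) - K.trace := by
  rw [frobInner_eq]
  have ht : K.trace = ∑ j, K j j := rfl
  rw [ht, ← Finset.sum_sub_distrib]
  refine Finset.sum_congr rfl fun j _ => ?_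
  simp only [Matrix.sub_apply, Matrix.one_apply, sub_mul, ite_mul, one_mul, zero_mul]
  rw [Finset.sum_sub_distrib]
  congr 1
  simp

lemma vmv_frob {d : ℕ} (K : Matrix (Fin d) (Fin d) ℝ) (a : Fin d → ℝ) :
    frobInner (vecMulVec a a - 1) K = a ⬝ᵥ K *ᵥ a - K.trace := by
  rw [frob_sub_one]
  congr 1
  rw [Finset.sum_comm]
  simp only [dotProduct, Matrix.mulVec, Matrix.vecMulVec_apply, Finset.mul_sum]
  exact Finset.sum_congr rfl fun i _ => Finset.sum_congr rfl fun j _ => by ring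

private lemma dv_pointwise {a b : ℝ} (ha : 0 ≤ a) (hb : 0 < b) :
    a - b ≤ a * Real.log a - a * Real.log b := by
  rcases eq_or_lt_of_le ha with h0 | h0
  · simp [← h0]; linarith
  · have hd : 0 < b / a := div_pos hb h0
    have h1 := Real.log_le_sub_one_of_pos hd
    rw [Real.log_div hb.ne' h0.ne'] at h1
    have h2 : a * (Real.log b - Real.log a) ≤ a * (b / a - 1) :=
      mul_le_mul_of_nonneg_left h1 h0.le
    have h3 : a * (b / a - 1) = b - a := by field_simp
    nlinarith

private lemma donsker_varadhan {α : Type*} [MeasurableSpace α] {μ : Measure α}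
    {h f : α → ℝ} (hh : Integrable h μ) (hnn : ∀ v, 0 ≤ h v)
    (hmass : ∫ v, h v ∂μ = 1)
    (hent : Integrable (fun v => h v * Real.log (h v)) μ)
    (hfh : Integrable (fun v => f v * h v) μ)
    (hef : Integrable (fun v => Real.exp (f v)) μ)
    (hZ : 0 < ∫ v, Real.exp (f v) ∂μ) :
    ∫ v, f v * h v ∂μ ≤ (∫ v, h v * Real.log (h v) ∂μ) + Real.log (∫ v, Real.exp (f v) ∂μ) := by
  set Z := ∫ v, Real.exp (f v) ∂μ with hZdef
  have key : ∫ v, (h v - Real.exp (f v) / Z) ∂μ ≤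
      ∫ v, (h v * Real.log (h v) - f v * h v + Real.log Z * h v) ∂μ := by
    refine integral_mono (hh.sub (hef.div_const Z))
      ((hent.sub hfh).add (hh.const_mul _)) fun v => ?_
    have h1 := dv_pointwise (hnn v) (div_pos (Real.exp_pos (f v)) hZ)
    rw [Real.log_div (Real.exp_pos _).ne' hZ.ne', Real.log_exp] at h1
    dsimp only
    nlinarith [h1]
  have hsub : Integrable (fun v => h v * Real.log (h v) - f v * h v) μ := hent.sub hfh
  rw [integral_sub hh (hef.div_const Z), integral_add hsub (hh.const_mul _),
    integral_sub hent hfh, integral_div, MeasureTheory.integral_const_mul, hmass, ← hZdef,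
    div_self hZ.ne'] at key
  linarith


section
variable {d : ℕ}

noncomputable def gc (d : ℕ) : ℝ := (2 * π) ^ (-(d : ℝ) / 2)

lemma gc_pos : 0 < gc d := by
  apply Real.rpow_pos_of_pos; positivity

noncomputable def ρ (d : ℕ) (v : EuclideanSpace ℝ (Fin d)) : ℝ := gc d * Real.exp (-‖v‖ ^ 2 / 2)

lemma ρ_pos (v : EuclideanSpace ℝ (Fin d)) : 0 < ρ d v := mul_pos gc_pos (Real.exp_pos _)

lemma ρ_meas : Measurable (ρ d) := by
  unfold ρ
  exact (((measurable_norm.pow_const 2).neg.div_const 2).exp).const_mul _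

lemma stdGaussian_eq : stdGaussian d =
    (volume : Measure (EuclideanSpace ℝ (Fin d))).withDensity
      (fun v => ((ρ d v).toNNReal : ℝ≥0∞)) := rfl

lemma integral_transfer (g : EuclideanSpace ℝ (Fin d) → ℝ) :
    ∫ v, g v ∂(stdGaussian d) = ∫ v, ρ d v * g v := by
  rw [stdGaussian_eq, integral_withDensity_eq_integral_smul ρ_meas.real_toNNReal g]
  congr 1; funext v
  simp [NNReal.smul_def, Real.coe_toNNReal _ (ρ_pos v).le]

lemma integrable_transfer (g : EuclideanSpace ℝ (Fin d) → ℝ) :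
    Integrable g (stdGaussian d) ↔ Integrable (fun v => ρ d v * g v) volume := by
  rw [stdGaussian_eq, integrable_withDensity_iff_integrable_smul ρ_meas.real_toNNReal]
  constructor <;> intro hI <;> [skip; skip] <;>
  · apply hI.congr
    filter_upwards with v
    simp [NNReal.smul_def, Real.coe_toNNReal _ (ρ_pos v).le]

lemma norm_sq_eq_dot (v : EuclideanSpace ℝ (Fin d)) : ‖v‖ ^ 2 = (fun i => v i) ⬝ᵥ (fun i => v i) := by
  rw [EuclideanSpace.norm_eq, Real.sq_sqrt (by positivity)]
  simp [dotProduct, sq]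

end
section
variable {d : ℕ}

lemma dot_symm {K : Matrix (Fin d) (Fin d) ℝ} (hKsymm : K.IsSymm) (x y : Fin d → ℝ) :
    x ⬝ᵥ K *ᵥ y = y ⬝ᵥ K *ᵥ x := by
  rw [Matrix.dotProduct_mulVec, ← Matrix.mulVec_transpose, hKsymm.eq, dotProduct_comm]

lemma quad_le {K : Matrix (Fin d) (Fin d) ℝ}
    (hK : ((1 : Matrix (Fin d) (Fin d) ℝ) - K).PosSemidef) (x : Fin d → ℝ) :
    x ⬝ᵥ K *ᵥ x ≤ x ⬝ᵥ x := by
  have h1 := hK.dotProduct_mulVec_nonneg x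
  simp only [star_trivial, Matrix.sub_mulVec, Matrix.one_mulVec, dotProduct_sub] at h1
  linarith

lemma quad_meas {K : Matrix (Fin d) (Fin d) ℝ} :
    Measurable (fun v : EuclideanSpace ℝ (Fin d) => (fun i => v i) ⬝ᵥ K *ᵥ (fun i => v i)) := by
  simp only [dotProduct, Matrix.mulVec]
  exact Finset.measurable_sum _ fun i _ => ((measurable_pi_apply i).comp (WithLp.measurable_ofLp 2 (Fin d → ℝ))).mul
    (Finset.measurable_sum _ fun j _ => ((measurable_pi_apply j).comp (WithLp.measurable_ofLp 2 (Fin d → ℝ))).const_mul _)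

lemma lin_meas (w : Fin d → ℝ) :
    Measurable (fun v : EuclideanSpace ℝ (Fin d) => w ⬝ᵥ (fun i => v i)) := by
  simp only [dotProduct]
  exact Finset.measurable_sum _ fun i _ => ((measurable_pi_apply i).comp (WithLp.measurable_ofLp 2 (Fin d → ℝ))).const_mul _

lemma integrable_exp_quad {K : Matrix (Fin d) (Fin d) ℝ}
    (hK : ((1 : Matrix (Fin d) (Fin d) ℝ) - K).PosSemidef)
    {β : ℝ} (hβ : 0 < β) (hβ' : β < 1 / 2) (w : Fin d → ℝ) :
    Integrable (fun v : EuclideanSpace ℝ (Fin d) =>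
      Real.exp (β * ((fun i => v i) ⬝ᵥ K *ᵥ (fun i => v i) - K.trace) + w ⬝ᵥ (fun i => v i)))
      (stdGaussian d) := by
  rw [integrable_transfer]
  set wE : EuclideanSpace ℝ (Fin d) := (WithLp.equiv 2 (Fin d → ℝ)).symm w with hwE
  have hb : (0:ℝ) < 1/2 - β := by linarith
  have hdom0 := (GaussianFourier.integrable_cexp_neg_mul_sq_norm_add
    (b := ((1/2 - β : ℝ) : ℂ)) (by simpa using hb) 1 wE).norm
  have hdom : Integrable (fun v : EuclideanSpace ℝ (Fin d) =>
      Real.exp (-(1/2 - β) * ‖v‖^2 + w ⬝ᵥ (fun i => v i))) volume := by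
    apply hdom0.congr
    filter_upwards with v
    rw [Complex.norm_exp]
    congr 1
    simp only [one_mul]
    rw [Complex.add_re]
    norm_cast
    simp [hwE, PiLp.inner_apply, dotProduct, mul_comm]
  refine Integrable.mono' (hdom.const_mul (gc d * Real.exp (-(β * K.trace)))) ?_ ?_
  · exact (ρ_meas.mul ((((quad_meas.sub measurable_const).const_mul β).add
      (lin_meas w)).exp)).aestronglyMeasurable
  · filter_upwards with v
    rw [Real.norm_eq_abs, abs_of_pos (mul_pos (ρ_pos v) (Real.exp_pos _))]
    unfold ρ
    rw [mul_assoc, ← Real.exp_add, mul_assoc, ← Real.exp_add]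
    apply mul_le_mul_of_nonneg_left _ gc_pos.le
    apply Real.exp_le_exp.mpr
    have hq := quad_le hK (fun i => v i)
    rw [← norm_sq_eq_dot] at hq
    nlinarith [hq]
end
section
variable {d : ℕ}

lemma exp_quad_pos_integral {K : Matrix (Fin d) (Fin d) ℝ}
    (hK : ((1 : Matrix (Fin d) (Fin d) ℝ) - K).PosSemidef)
    {β : ℝ} (hβ : 0 < β) (hβ' : β < 1 / 2) :
    0 < ∫ v, Real.exp (β * ((fun i => v i) ⬝ᵥ K *ᵥ (fun i => v i) - K.trace))
        ∂(stdGaussian d) := by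
  have hint := integrable_exp_quad hK hβ hβ' (0 : Fin d → ℝ)
  simp only [zero_dotProduct, add_zero] at hint
  have h2 : ∫ v, Real.exp (β * ((fun i => v i) ⬝ᵥ K *ᵥ (fun i => v i) - K.trace))
      ∂(stdGaussian d) = ∫ v, ρ d v * Real.exp (β * ((fun i => v i) ⬝ᵥ K *ᵥ (fun i => v i)
        - K.trace)) := integral_transfer _
  rw [h2]
  rw [integrable_transfer] at hint
  rw [integral_pos_iff_support_of_nonneg _ hint]
  · have : (Function.support fun v : EuclideanSpace ℝ (Fin d) =>
        ρ d v * Real.exp (β * ((fun i => v i) ⬝ᵥ K *ᵥ (fun i => v i) - K.trace)))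
        = Set.univ := by
      ext v; simp only [Function.mem_support, Set.mem_univ, iff_true]
      exact (mul_pos (ρ_pos v) (Real.exp_pos _)).ne'
    rw [this]
    have : (Set.univ : Set (EuclideanSpace ℝ (Fin d))).Nonempty := ⟨0, trivial⟩
    exact isOpen_univ.measure_pos volume this
  · intro v
    exact (mul_pos (ρ_pos v) (Real.exp_pos _)).le

lemma translate_integral {K : Matrix (Fin d) (Fin d) ℝ} (hKsymm : K.IsSymm) (β : ℝ)
    (m : EuclideanSpace ℝ (Fin d)) :
    ∫ v, Real.exp (β * ((fun i => v i) ⬝ᵥ K *ᵥ (fun i => v i) - K.trace)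
          + ((fun i => m i) - (2 * β) • (K *ᵥ (fun i => m i))) ⬝ᵥ (fun i => v i))
        ∂(stdGaussian d)
      = Real.exp ((fun i => m i) ⬝ᵥ (fun i => m i) / 2
          - β * ((fun i => m i) ⬝ᵥ K *ᵥ (fun i => m i)))
        * ∫ v, Real.exp (β * ((fun i => v i) ⬝ᵥ K *ᵥ (fun i => v i) - K.trace))
            ∂(stdGaussian d) := by
  rw [integral_transfer, integral_transfer, ← MeasureTheory.integral_const_mul,
    ← MeasureTheory.integral_add_right_eq_self (μ := volume) (fun v => ρ d v *
      Real.exp (β * ((fun i => v i) ⬝ᵥ K *ᵥ (fun i => v i) - K.trace)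
        + ((fun i => m i) - (2 * β) • (K *ᵥ (fun i => m i))) ⬝ᵥ (fun i => v i))) m]
  congr 1; funext v
  have hx : (fun i => (v + m) i) = (fun i => v i) + (fun i => m i) := by
    funext i; simp
  unfold ρ
  rw [mul_assoc, ← Real.exp_add, mul_left_comm, mul_assoc, ← Real.exp_add, ← Real.exp_add]
  congr 1
  rw [norm_sq_eq_dot (v + m), norm_sq_eq_dot v, hx]
  have hs1 : (fun i => v i) ⬝ᵥ K *ᵥ (fun i => m i)
      = (fun i => m i) ⬝ᵥ K *ᵥ (fun i => v i) := dot_symm hKsymm _ _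
  have hc1 : (K *ᵥ (fun i => m i)) ⬝ᵥ (fun i => v i)
      = (fun i => m i) ⬝ᵥ K *ᵥ (fun i => v i) := by
    rw [dotProduct_comm, dot_symm hKsymm]
  have hc2 : (K *ᵥ (fun i => m i)) ⬝ᵥ (fun i => m i)
      = (fun i => m i) ⬝ᵥ K *ᵥ (fun i => m i) := by
    rw [dotProduct_comm, dot_symm hKsymm]
  have hc3 : (fun i => m i) ⬝ᵥ (fun i => v i) = (fun i => v i) ⬝ᵥ (fun i => m i) :=
    dotProduct_comm _ _
  simp only [Matrix.mulVec_add, add_dotProduct, dotProduct_add,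
    sub_dotProduct, smul_dotProduct, smul_eq_mul]
  rw [hs1, hc1, hc2, hc3]
  congr 1
  ring
end

/-- Conditional covariance duality: for a probability density `h` with respect to the
standard Gaussian `γ` on `ℝ^d` with finite entropy and finite second moment, mean `m`
and covariance `Σ`, and for a symmetric matrix `K ≤ I_d`, the Gaussian exponential moment
`Λ_β(K) = log ∫ exp(β⟨z⊗z − I, K⟩_F) dγ(z)` is finite for `0 < β < 1/2` and
`⟨Σ − I, K⟩_F ≤ (1/β) Ent_γ(h) + (1/β) Λ_β(K)`. -/
theorem covariance_duality (d : ℕ) (β : ℝ) (hβ : 0 < β) (hβ' : β < 1 / 2)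
    (h : EuclideanSpace ℝ (Fin d) → ℝ)
    (hmeas : Measurable h) (hnonneg : ∀ v, 0 ≤ h v)
    (hmass : ∫ v, h v ∂(stdGaussian d) = 1)
    (hent : Integrable (fun v => h v * Real.log (h v)) (stdGaussian d))
    (hmom2 : Integrable (fun v => ‖v‖ ^ 2 * h v) (stdGaussian d))
    (m : EuclideanSpace ℝ (Fin d)) (hm : m = ∫ v, h v • v ∂(stdGaussian d))
    (Smat : Matrix (Fin d) (Fin d) ℝ)
    (hS : ∀ i j, Smat i j = ∫ v, (v i - m i) * (v j - m j) * h v ∂(stdGaussian d))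
    (K : Matrix (Fin d) (Fin d) ℝ) (hKsymm : K.IsSymm)
    (hK : ((1 : Matrix (Fin d) (Fin d) ℝ) - K).PosSemidef) :
    Integrable
        (fun z => Real.exp (β * frobInner
          (vecMulVec (fun i => z i) (fun i => z i) - 1) K)) (stdGaussian d) ∧
      frobInner (Smat - 1) K
        ≤ (1 / β) * (∫ v, h v * Real.log (h v) ∂(stdGaussian d))
          + (1 / β) * Real.log (∫ z, Real.exp (β * frobInner
              (vecMulVec (fun i => z i) (fun i => z i) - 1) K) ∂(stdGaussian d)) := by
  have hint0 : Integrable (fun v : EuclideanSpace ℝ (Fin d) =>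
      Real.exp (β * ((fun i => v i) ⬝ᵥ K *ᵥ (fun i => v i) - K.trace))) (stdGaussian d) := by
    have := integrable_exp_quad hK hβ hβ' (0 : Fin d → ℝ)
    simpa using this
  constructor
  · simp only [vmv_frob]
    exact hint0
  simp only [vmv_frob]
  -- notation
  set γ := stdGaussian d with hγ
  set mm : Fin d → ℝ := fun i => m i with hmm
  set l : Fin d → ℝ := mm - (2 * β) • (K *ᵥ mm) with hl
  set Z₀ : ℝ := ∫ v, Real.exp (β * ((fun i => v i) ⬝ᵥ K *ᵥ (fun i => v i) - K.trace)) ∂γ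
    with hZ₀
  have hZ₀pos : 0 < Z₀ := exp_quad_pos_integral hK hβ hβ'
  set Ent : ℝ := ∫ v, h v * Real.log (h v) ∂γ with hEnt
  -- basic integrability of h and moments
  have hInt_h : Integrable h γ := by
    by_contra hc
    rw [MeasureTheory.integral_undef hc] at hmass
    norm_num at hmass
  have habs : ∀ (v : EuclideanSpace ℝ (Fin d)) (i : Fin d), |v i| ≤ ‖v‖ := by
    intro v i
    have h1 : (v i) ^ 2 ≤ ‖v‖ ^ 2 := by
      rw [norm_sq_eq_dot]
      have := Finset.single_le_sum (f := fun j => v j * v j)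
        (fun j _ => mul_self_nonneg (v j)) (Finset.mem_univ i)
      simpa [dotProduct, sq] using this
    calc |v i| = Real.sqrt ((v i) ^ 2) := (Real.sqrt_sq_eq_abs _).symm
      _ ≤ Real.sqrt (‖v‖ ^ 2) := Real.sqrt_le_sqrt h1
      _ = ‖v‖ := Real.sqrt_sq (norm_nonneg v)
  have hInt_vij : ∀ i j, Integrable (fun v => v i * (v j * h v)) γ := by
    intro i j
    refine hmom2.mono' ((((measurable_pi_apply i).comp (WithLp.measurable_ofLp 2 (Fin d → ℝ))).mul
      (((measurable_pi_apply j).comp (WithLp.measurable_ofLp 2 (Fin d → ℝ))).mul hmeas)).aestronglyMeasurable) ?_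
    filter_upwards with v
    rw [Real.norm_eq_abs, abs_mul, abs_mul, abs_of_nonneg (hnonneg v)]
    have h1 := habs v i
    have h2 := habs v j
    have h3 := hnonneg v
    have h5 := abs_nonneg (v j)
    have h6 := norm_nonneg v
    calc |v i| * (|v j| * h v) = (|v i| * |v j|) * h v := by ring
      _ ≤ (‖v‖ * ‖v‖) * h v :=
          mul_le_mul_of_nonneg_right (mul_le_mul h1 h2 h5 h6) h3
      _ = ‖v‖ ^ 2 * h v := by ring
  have hInt_vi : ∀ i, Integrable (fun v => v i * h v) γ := by
    intro i
    refine (hInt_h.add hmom2).mono' ((((measurable_pi_apply i).comp (WithLp.measurable_ofLp 2 (Fin d → ℝ))).mul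
      hmeas).aestronglyMeasurable) ?_
    filter_upwards with v
    rw [Real.norm_eq_abs, abs_mul, abs_of_nonneg (hnonneg v)]
    have h1 := habs v i
    have h3 := hnonneg v
    have h6 := norm_nonneg v
    have h7 : ‖v‖ ≤ 1 + ‖v‖ ^ 2 := by nlinarith [sq_nonneg (‖v‖ - 1)]
    calc |v i| * h v ≤ ‖v‖ * h v := mul_le_mul_of_nonneg_right h1 h3
      _ ≤ (1 + ‖v‖ ^ 2) * h v := mul_le_mul_of_nonneg_right h7 h3
      _ = h v + ‖v‖ ^ 2 * h v := by ring
  have hInt_smulv : Integrable (fun v : EuclideanSpace ℝ (Fin d) => h v • v) γ := by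
    refine (hInt_h.add hmom2).mono' (hmeas.aestronglyMeasurable.smul
      measurable_id.aestronglyMeasurable) ?_
    filter_upwards with v
    rw [norm_smul, Real.norm_eq_abs, abs_of_nonneg (hnonneg v)]
    have h3 := hnonneg v
    have h7 : ‖v‖ ≤ 1 + ‖v‖ ^ 2 := by nlinarith [sq_nonneg (‖v‖ - 1), norm_nonneg v]
    calc h v * ‖v‖ ≤ h v * (1 + ‖v‖ ^ 2) := mul_le_mul_of_nonneg_left h7 h3
      _ = h v + ‖v‖ ^ 2 * h v := by ring
  have hmi : ∀ i, ∫ v, v i * h v ∂γ = m i := by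
    intro i
    have h1 := (EuclideanSpace.proj (𝕜 := ℝ) i).integral_comp_comm hInt_smulv
    have h2 : ∀ v : EuclideanSpace ℝ (Fin d),
        (EuclideanSpace.proj (𝕜 := ℝ) i) (h v • v) = v i * h v := by
      intro v
      simp [mul_comm]
    rw [show (fun v => v i * h v) = fun v =>
      (EuclideanSpace.proj (𝕜 := ℝ) i) (h v • v) from funext fun v => (h2 v).symm]
    rw [h1, ← hm]
    rfl
  have hSij : ∀ i j, ∫ v, v i * (v j * h v) ∂γ = Smat i j + m i * m j := by
    intro i j
    have e1 : (fun v : EuclideanSpace ℝ (Fin d) => (v i - m i) * (v j - m j) * h v)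
        = fun v => v i * (v j * h v) - m i * (v j * h v) - m j * (v i * h v)
          + (m i * m j) * h v := by
      funext v; ring
    have hSv := hS i j
    rw [e1] at hSv
    have I1 : Integrable (fun v => v i * (v j * h v) - m i * (v j * h v)) γ :=
      (hInt_vij i j).sub ((hInt_vi j).const_mul (m i))
    have I2 : Integrable
        (fun v => v i * (v j * h v) - m i * (v j * h v) - m j * (v i * h v)) γ :=
      I1.sub ((hInt_vi i).const_mul (m j))
    rw [MeasureTheory.integral_add I2 (hInt_h.const_mul _),
      MeasureTheory.integral_sub I1 ((hInt_vi i).const_mul (m j)),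
      MeasureTheory.integral_sub (hInt_vij i j) ((hInt_vi j).const_mul (m i)),
      MeasureTheory.integral_const_mul, MeasureTheory.integral_const_mul,
      MeasureTheory.integral_const_mul, hmi i, hmi j, hmass] at hSv
    linarith
  -- the tilted test function
  set f : EuclideanSpace ℝ (Fin d) → ℝ := fun v =>
    β * ((fun i => v i) ⬝ᵥ K *ᵥ (fun i => v i) - K.trace) + l ⬝ᵥ (fun i => v i) with hf
  have key1 : ∀ v : EuclideanSpace ℝ (Fin d),
      ∑ i, ∑ j, K i j * (v i * (v j * h v))
        = ((fun i => v i) ⬝ᵥ K *ᵥ (fun i => v i)) * h v := by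
    intro v
    simp only [dotProduct, Matrix.mulVec, Finset.sum_mul, Finset.mul_sum]
    exact Finset.sum_congr rfl fun i _ => Finset.sum_congr rfl fun j _ => by ring
  have key2 : ∀ v : EuclideanSpace ℝ (Fin d),
      ∑ i, l i * (v i * h v) = (l ⬝ᵥ (fun i => v i)) * h v := by
    intro v
    simp only [dotProduct, Finset.sum_mul]
    exact Finset.sum_congr rfl fun i _ => by ring
  have hfh_eq : (fun v => f v * h v) = fun v =>
      β * (∑ i, ∑ j, K i j * (v i * (v j * h v))) - (β * K.trace) * h v
        + ∑ i, l i * (v i * h v) := by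
    funext v
    rw [key1 v, key2 v]
    simp only [hf]
    ring
  have Ia : Integrable (fun v => β * (∑ i, ∑ j, K i j * (v i * (v j * h v)))) γ :=
    (MeasureTheory.integrable_finset_sum _ fun i _ =>
      MeasureTheory.integrable_finset_sum _ fun j _ =>
        ((hInt_vij i j).const_mul (K i j))).const_mul β
  have Ib : Integrable (fun v =>
      β * (∑ i, ∑ j, K i j * (v i * (v j * h v))) - (β * K.trace) * h v) γ :=
    Ia.sub (hInt_h.const_mul _)
  have Ic : Integrable (fun v => ∑ i, l i * (v i * h v)) γ :=
    MeasureTheory.integrable_finset_sum _ fun i _ => (hInt_vi i).const_mul (l i)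
  have hInt_fh : Integrable (fun v => f v * h v) γ := by
    rw [hfh_eq]; exact Ib.add Ic
  have e2 : ∫ v, (∑ i, ∑ j, K i j * (v i * (v j * h v))) ∂γ
      = ∑ i, ∑ j, K i j * (Smat i j + m i * m j) := by
    rw [MeasureTheory.integral_finset_sum _ (fun i _ =>
      MeasureTheory.integrable_finset_sum _ fun j _ => ((hInt_vij i j).const_mul (K i j)))]
    refine Finset.sum_congr rfl fun i _ => ?_
    rw [MeasureTheory.integral_finset_sum _ (fun j _ => ((hInt_vij i j).const_mul (K i j)))]
    refine Finset.sum_congr rfl fun j _ => ?_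
    rw [MeasureTheory.integral_const_mul, hSij i j]
  have e3 : ∫ v, (∑ i, l i * (v i * h v)) ∂γ = ∑ i, l i * m i := by
    rw [MeasureTheory.integral_finset_sum _ (fun i _ => (hInt_vi i).const_mul (l i))]
    refine Finset.sum_congr rfl fun i _ => ?_
    rw [MeasureTheory.integral_const_mul, hmi i]
  have hIv : ∫ v, f v * h v ∂γ
      = β * (∑ i, ∑ j, K i j * (Smat i j + m i * m j)) - β * K.trace + ∑ i, l i * m i := by
    rw [hfh_eq, MeasureTheory.integral_add Ib Ic,
      MeasureTheory.integral_sub Ia (hInt_h.const_mul _),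
      MeasureTheory.integral_const_mul, MeasureTheory.integral_const_mul, e2, e3, hmass]
    ring
  have hInt_expf : Integrable (fun v => Real.exp (f v)) γ :=
    integrable_exp_quad hK hβ hβ' l
  have hZf : ∫ v, Real.exp (f v) ∂γ
      = Real.exp (mm ⬝ᵥ mm / 2 - β * (mm ⬝ᵥ K *ᵥ mm)) * Z₀ :=
    translate_integral hKsymm β m
  have hZfpos : 0 < ∫ v, Real.exp (f v) ∂γ := by
    rw [hZf]; exact mul_pos (Real.exp_pos _) hZ₀pos
  have hdv := donsker_varadhan hInt_h hnonneg hmass hent hInt_fh hInt_expf hZfpos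
  rw [hIv, hZf, Real.log_mul (Real.exp_ne_zero _) hZ₀pos.ne', Real.log_exp, ← hEnt] at hdv
  have a0 : ∑ i, ∑ j, K i j * (Smat i j + m i * m j)
      = (∑ i, ∑ j, K i j * Smat i j) + ∑ i, ∑ j, K i j * (m i * m j) := by
    rw [← Finset.sum_add_distrib]
    refine Finset.sum_congr rfl fun i _ => ?_
    rw [← Finset.sum_add_distrib]
    exact Finset.sum_congr rfl fun j _ => by ring
  have a1 : ∑ i, ∑ j, K i j * Smat i j = frobInner (Smat - 1) K + K.trace := by
    rw [frob_sub_one]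
    have hcomm : ∑ j, ∑ i, Smat i j * K i j = ∑ i, ∑ j, K i j * Smat i j := by
      rw [Finset.sum_comm]
      exact Finset.sum_congr rfl fun i _ => Finset.sum_congr rfl fun j _ => by ring
    rw [hcomm]
    ring
  have a2 : ∑ i, ∑ j, K i j * (m i * m j) = mm ⬝ᵥ K *ᵥ mm := by
    simp only [hmm, dotProduct, Matrix.mulVec, Finset.mul_sum]
    exact Finset.sum_congr rfl fun i _ => Finset.sum_congr rfl fun j _ => by ring
  have a3 : ∑ i, l i * m i = mm ⬝ᵥ mm - 2 * β * (mm ⬝ᵥ K *ᵥ mm) := by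
    have ha : ∑ i, l i * m i = l ⬝ᵥ mm := by
      simp only [hmm, dotProduct]
    rw [ha, hl, sub_dotProduct, smul_dotProduct, smul_eq_mul,
      dotProduct_comm (K *ᵥ mm) mm]
  have hSm : 0 ≤ mm ⬝ᵥ mm := by
    have h0 : mm ⬝ᵥ mm = ‖m‖ ^ 2 := (norm_sq_eq_dot m).symm
    rw [h0]
    positivity
  rw [a0, a1, a2, a3] at hdv
  have hfinal : frobInner (Smat - 1) K ≤ (Ent + Real.log Z₀) / β := by
    rw [le_div_iff₀ hβ]
    nlinarith [hdv, hSm]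
  calc frobInner (Smat - 1) K ≤ (Ent + Real.log Z₀) / β := hfinal
    _ = 1 / β * Ent + 1 / β * Real.log Z₀ := by ring
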